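/- If t: {x_1,…,x_n} → {0,1} is a satisfying truth assignment of Γ, then the matching M that arises from {u_i f_i : i ∈ [n], t(x_i) = 0} ∪ {u_i t_i : i ∈ [n], t(x_i) = 1} by adding, for every j ∈ [m], an edge v_j w where the literal identified with the vertex w ∈ C_j is true under t, is an induced matching in G(Γ) of size n+m. -/

import Mathlib

open SimpleGraph

/-- The subgraph of `G` consisting of those pairs in `s` that are actually edges of `G`. -/
def pairsSubgraph {V : Type*} (G : SimpleGraph V) (s : Set (V × V)) : G.Subgraph where
  verts := {v | ∃ a b, (G.Adj a b ∧ ((a, b) ∈ s ∨ (b, a) ∈ s)) ∧ (v = a ∨ v = b)}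
  Adj a b := G.Adj a b ∧ ((a, b) ∈ s ∨ (b, a) ∈ s)
  adj_sub h := h.1
  edge_vert h := ⟨_, _, h, Or.inl rfl⟩
  symm := ⟨fun _ _ h => ⟨h.1.symm, h.2.symm⟩⟩

/-- `M` is an induced matching in `G`: it is a matching, and `G(M)`, the subgraph of `G`
induced by the set `V(M)` of covered vertices (which is `M.verts` for a matching subgraph),
is `1`-regular, i.e. every vertex of `G(M)` has exactly one neighbour in `G(M)`. -/
def IsInducedMatching {V : Type*} (G : SimpleGraph V) (M : G.Subgraph) : Prop :=
  M.IsMatching ∧ ∀ v : M.verts, ∃! w : M.verts, (G.induce M.verts).Adj v w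

/-- `M` is an acyclic matching in `G`: it is a matching and `G(M)` is a forest. -/
def IsAcyclicMatching {V : Type*} (G : SimpleGraph V) (M : G.Subgraph) : Prop :=
  M.IsMatching ∧ (G.induce M.verts).IsAcyclic

/-- `M` is a uniquely restricted matching in `G`: it is a matching and it is the unique
perfect matching of `G(M)`, i.e. the unique matching of `G` covering exactly `M.verts`. -/
def IsURMatching {V : Type*} (G : SimpleGraph V) (M : G.Subgraph) : Prop :=
  M.IsMatching ∧ ∀ M' : G.Subgraph, M'.IsMatching → M'.verts = M.verts → M' = M

/-- The (ordinary) matching number `ν(G)`: the maximum cardinality of a matching in `G`. -/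
noncomputable def nuMatch {V : Type*} (G : SimpleGraph V) : ℕ :=
  sSup {k : ℕ | ∃ M : G.Subgraph, M.IsMatching ∧ M.edgeSet.ncard = k}

/-- The uniquely restricted matching number `ν_ur(G)`. -/
noncomputable def nuUR {V : Type*} (G : SimpleGraph V) : ℕ :=
  sSup {k : ℕ | ∃ M : G.Subgraph, IsURMatching G M ∧ M.edgeSet.ncard = k}

/-- The acyclic matching number `ν_ac(G)`. -/
noncomputable def nuAc {V : Type*} (G : SimpleGraph V) : ℕ :=
  sSup {k : ℕ | ∃ M : G.Subgraph, IsAcyclicMatching G M ∧ M.edgeSet.ncard = k}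

/-- The induced (strong) matching number `ν_s(G)`. -/
noncomputable def nuS {V : Type*} (G : SimpleGraph V) : ℕ :=
  sSup {k : ℕ | ∃ M : G.Subgraph, IsInducedMatching G M ∧ M.edgeSet.ncard = k}

/-- `cyc` is an `M`-alternating cycle in `G`: a cycle of `G` whose edges alternate between
edges of `M` and edges of `E(G) \ M`. -/
def IsAltCycle {V : Type*} (G : SimpleGraph V) (M : G.Subgraph) {v : V}
    (cyc : G.Walk v v) : Prop :=
  cyc.IsCycle ∧ cyc.toSubgraph.spanningCoe.IsAlternating M.spanningCoe

/-- Vertices of the graph `G(Γ)` for the SATISFIABILITY instance `Γ` with `n` variables and `m`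
clauses: `Sum.inl (i, 0) = t_i`, `Sum.inl (i, 1) = f_i`, `Sum.inl (i, 2) = u_i` are the vertices
of the triangle `X_i`; `Sum.inr (j, none) = v_j`, and `Sum.inr (j, some l)` is the vertex of the
clique `C_j` identified with the literal `l` (it is isolated unless `l` belongs to `c_j`, so that
the clique `C_j` effectively has `|c_j| + 1` vertices). A literal `(i, true)` is `x_i` and a
literal `(i, false)` is `¬x_i`. -/
abbrev SatV (n m : ℕ) : Type := (Fin n × Fin 3) ⊕ (Fin m × Option (Fin n × Bool))

/-- The base relation for `G(Γ)`: all edges inside each triangle `X_i`, all edges inside each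
clique `C_j`, an edge from `f_i` to every vertex identified with the literal `x_i`, and an edge
from `t_i` to every vertex identified with the literal `¬x_i`. -/
def satRel {n m : ℕ} (c : Fin m → Finset (Fin n × Bool)) : SatV n m → SatV n m → Prop
  | Sum.inl (i, k), Sum.inl (i', k') => i = i' ∧ k ≠ k'
  | Sum.inr (j, o), Sum.inr (j', o') =>
      j = j' ∧ o ≠ o' ∧ (∀ l, o = some l → l ∈ c j) ∧ (∀ l, o' = some l → l ∈ c j)
  | Sum.inl (i, k), Sum.inr (j, o) =>
      (k = 1 ∧ o = some (i, true) ∧ (i, true) ∈ c j) ∨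
      (k = 0 ∧ o = some (i, false) ∧ (i, false) ∈ c j)
  | Sum.inr _, Sum.inl _ => False

/-- The graph `G(Γ)` built from the SATISFIABILITY instance `Γ` whose clauses are given by `c`. -/
def satGraph {n m : ℕ} (c : Fin m → Finset (Fin n × Bool)) : SimpleGraph (SatV n m) :=
  SimpleGraph.fromRel (satRel c)

/-- The matching arising from `{u_i f_i : t(x_i) = 0} ∪ {u_i t_i : t(x_i) = 1}` by adding, for
every `j ∈ [m]`, the edge `v_j w` where `w = Sum.inr (j, some (g j))` is a vertex of `C_j`
identified with a literal that is true under `t`. -/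
def M5 {n m : ℕ} (c : Fin m → Finset (Fin n × Bool)) (t : Fin n → Bool)
    (g : Fin m → Fin n × Bool) : (satGraph c).Subgraph :=
  pairsSubgraph (satGraph c)
    ({pr | ∃ i : Fin n, (t i = false ∧ pr = (Sum.inl (i, 2), Sum.inl (i, 1))) ∨
        (t i = true ∧ pr = (Sum.inl (i, 2), Sum.inl (i, 0)))} ∪
     {pr | ∃ j : Fin m, pr = (Sum.inr (j, none), Sum.inr (j, some (g j)))})

/-!
The vertices covered by `M5 c t g` are `u_i` and the vertex of `X_i` standing for the value
`t(x_i)` (`t_i` for true, `f_i` for false), together with `v_j` and a vertex of `C_j` carrying a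
true literal. Two covered vertices of one triangle, or of one clique, are matched to each other.
The only edges between a triangle and a clique join a literal vertex to the vertex of its
variable standing for the opposite value, and that vertex is uncovered when the literal is true.
-/

section PairsSubgraph

variable {V ι : Type*} {G : SimpleGraph V}

lemma isInducedMatching_of_isMatching {M : G.Subgraph} (hM : M.IsMatching)
    (hind : ∀ a ∈ M.verts, ∀ b ∈ M.verts, G.Adj a b → M.Adj a b) : IsInducedMatching G M := by
  refine ⟨hM, fun ⟨a, ha⟩ => ?_⟩
  obtain ⟨b, hab, hb⟩ := hM ha
  refine ⟨⟨b, M.edge_vert hab.symm⟩, M.adj_sub hab, fun ⟨c, hc⟩ hac => ?_⟩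
  exact Subtype.ext (hb c (hind a ha c hc hac))

variable {f : ι → V × V}

/-- All `2 * |ι|` endpoints of the pairs `f k` are distinct. -/
def EndpointsInjective (f : ι → V × V) : Prop :=
  Function.Injective (Sum.elim (fun k => (f k).1) (fun k => (f k).2))

lemma pairsSubgraph_range_adj (hf : ∀ k, G.Adj (f k).1 (f k).2) {a b : V} :
    (pairsSubgraph G (Set.range f)).Adj a b ↔ ∃ k, f k = (a, b) ∨ f k = (b, a) := by
  constructor
  · rintro ⟨-, ⟨k, hk⟩ | ⟨k, hk⟩⟩ <;> exact ⟨k, by tauto⟩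
  rintro ⟨k, hk | hk⟩
  · exact ⟨by simpa [hk] using hf k, Or.inl ⟨k, hk⟩⟩
  · exact ⟨by simpa [hk] using (hf k).symm, Or.inr ⟨k, hk⟩⟩

lemma mem_pairsSubgraph_range_verts (hf : ∀ k, G.Adj (f k).1 (f k).2) {v : V} :
    v ∈ (pairsSubgraph G (Set.range f)).verts ↔ ∃ k, v = (f k).1 ∨ v = (f k).2 := by
  constructor
  · rintro ⟨a, b, ⟨-, ⟨k, hk⟩ | ⟨k, hk⟩⟩, hv⟩ <;> refine ⟨k, ?_⟩ <;> rw [hk] <;> tauto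
  · rintro ⟨k, hv⟩
    exact ⟨_, _, ⟨hf k, Or.inl ⟨k, rfl⟩⟩, hv⟩

variable (hf : ∀ k, G.Adj (f k).1 (f k).2) (hinj : EndpointsInjective f)
include hf hinj

lemma isMatching_pairsSubgraph_range : (pairsSubgraph G (Set.range f)).IsMatching := by
  have fst_inj {k k'} (h : (f k).1 = (f k').1) : k = k' := Sum.inl_injective (hinj h)
  have snd_inj {k k'} (h : (f k).2 = (f k').2) : k = k' := Sum.inr_injective (hinj h)
  have fst_ne_snd {k k'} (h : (f k).1 = (f k').2) : False := Sum.inl_ne_inr (hinj h)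
  intro v hv
  obtain ⟨k, rfl | rfl⟩ := (mem_pairsSubgraph_range_verts hf).1 hv
  · refine ⟨(f k).2, (pairsSubgraph_range_adj hf).2 ⟨k, Or.inl rfl⟩, fun w hw => ?_⟩
    obtain ⟨k', hk' | hk'⟩ := (pairsSubgraph_range_adj hf).1 hw <;>
      simp only [Prod.ext_iff] at hk'
    · rw [← hk'.2, fst_inj hk'.1]
    · exact (fst_ne_snd hk'.2.symm).elim
  · refine ⟨(f k).1, (pairsSubgraph_range_adj hf).2 ⟨k, Or.inr rfl⟩, fun w hw => ?_⟩
    obtain ⟨k', hk' | hk'⟩ := (pairsSubgraph_range_adj hf).1 hw <;>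
      simp only [Prod.ext_iff] at hk'
    · exact (fst_ne_snd hk'.1).elim
    · rw [← hk'.1, snd_inj hk'.2]

lemma ncard_edgeSet_pairsSubgraph_range :
    (pairsSubgraph G (Set.range f)).edgeSet.ncard = Nat.card ι := by
  have hedges :
      (pairsSubgraph G (Set.range f)).edgeSet = Set.range fun k => s((f k).1, (f k).2) := by
    ext e
    induction e with
    | _ a b =>
      simp only [Subgraph.mem_edgeSet, pairsSubgraph_range_adj hf, Set.mem_range, Sym2.eq_iff,
        Prod.ext_iff]
  rw [hedges, Set.ncard_range_of_injective]
  intro k k' h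
  rcases Sym2.eq_iff.1 h with ⟨h1, -⟩ | ⟨h1, -⟩
  · exact Sum.inl_injective (hinj h1)
  · exact (Sum.inl_ne_inr (hinj h1)).elim

end PairsSubgraph

section SatGraph

variable {n m : ℕ} {c : Fin m → Finset (Fin n × Bool)} {t : Fin n → Bool}
  {g : Fin m → Fin n × Bool}

variable (t g) in
def m5Pair : Fin n ⊕ Fin m → SatV n m × SatV n m
  | Sum.inl i => (Sum.inl (i, 2), Sum.inl (i, if t i then 0 else 1))
  | Sum.inr j => (Sum.inr (j, none), Sum.inr (j, some (g j)))

variable (c t g) in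
lemma M5_eq_pairsSubgraph_range :
    M5 c t g = pairsSubgraph (satGraph c) (Set.range (m5Pair t g)) := by
  unfold M5
  congr 1
  ext ⟨a, b⟩
  simp only [Set.mem_union, Set.mem_ofPred_eq, Prod.mk.injEq, Set.mem_range, m5Pair, Sum.exists]
  grind

lemma satGraph_adj_m5Pair (hg : ∀ j, g j ∈ c j) (k : Fin n ⊕ Fin m) :
    (satGraph c).Adj (m5Pair t g k).1 (m5Pair t g k).2 := by
  rcases k with i | j
  · cases h : t i <;> simp [satGraph, satRel, m5Pair, h]
  · simp [satGraph, satRel, m5Pair, hg j]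

lemma endpointsInjective_m5Pair : EndpointsInjective (m5Pair t g) := by
  rintro ((i | j) | (i | j)) ((i' | j') | (i' | j')) h <;> simp [m5Pair] at h ⊢ <;> grind

lemma not_satRel_of_literal_true {i : Fin n} {j : Fin m} {l : Fin n × Bool} (hl : t l.1 = l.2) :
    ¬ satRel c (Sum.inl (i, if t i then 0 else 1)) (Sum.inr (j, some l)) := by
  rintro (⟨hk, ho, -⟩ | ⟨hk, ho, -⟩) <;> cases Option.some.inj ho <;> simp_all

lemma mem_M5_verts_inl (hg : ∀ j, g j ∈ c j) {i : Fin n} {k : Fin 3} :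
    Sum.inl (i, k) ∈ (M5 c t g).verts ↔ k = 2 ∨ k = if t i then 0 else 1 := by
  rw [M5_eq_pairsSubgraph_range, mem_pairsSubgraph_range_verts (satGraph_adj_m5Pair hg)]
  simp only [m5Pair, Sum.exists, Sum.inl.injEq, Prod.mk.injEq, reduceCtorEq, or_self, exists_false,
    or_false]
  grind

lemma mem_M5_verts_inr (hg : ∀ j, g j ∈ c j) {j : Fin m} {o : Option (Fin n × Bool)} :
    Sum.inr (j, o) ∈ (M5 c t g).verts ↔ o = none ∨ o = some (g j) := by
  rw [M5_eq_pairsSubgraph_range, mem_pairsSubgraph_range_verts (satGraph_adj_m5Pair hg)]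
  simp only [m5Pair, Sum.exists, reduceCtorEq, or_self, exists_false, Sum.inr.injEq, Prod.mk.injEq,
    false_or]
  grind

lemma M5_adj_of_satRel (hg : ∀ j, g j ∈ c j ∧ t (g j).1 = (g j).2) {a b : SatV n m}
    (ha : a ∈ (M5 c t g).verts) (hb : b ∈ (M5 c t g).verts) (hne : a ≠ b)
    (hab : satRel c a b) : (M5 c t g).Adj a b := by
  have hc j : g j ∈ c j := (hg j).1
  rw [M5_eq_pairsSubgraph_range, pairsSubgraph_range_adj (satGraph_adj_m5Pair hc)]
  rcases a with ⟨i, k⟩ | ⟨j, o⟩ <;> rcases b with ⟨i', k'⟩ | ⟨j', o'⟩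
  · obtain ⟨rfl, hkk'⟩ := hab
    rw [mem_M5_verts_inl hc] at ha hb
    refine ⟨Sum.inl i, ?_⟩
    simp only [m5Pair, Prod.mk.injEq, Sum.inl.injEq, true_and]
    grind
  · rw [mem_M5_verts_inl hc] at ha
    rw [mem_M5_verts_inr hc] at hb
    exfalso
    rcases ha with rfl | rfl
    · simp [satRel] at hab
    rcases hb with rfl | rfl
    · simp [satRel] at hab
    exact not_satRel_of_literal_true (hg j').2 hab
  · exact hab.elim
  · obtain ⟨rfl, hoo', -⟩ := hab
    rw [mem_M5_verts_inr hc] at ha hb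
    refine ⟨Sum.inr j, ?_⟩
    simp only [m5Pair, Prod.mk.injEq, Sum.inr.injEq, true_and]
    grind

lemma M5_adj_of_adj (hg : ∀ j, g j ∈ c j ∧ t (g j).1 = (g j).2) {a b : SatV n m}
    (ha : a ∈ (M5 c t g).verts) (hb : b ∈ (M5 c t g).verts) (hab : (satGraph c).Adj a b) :
    (M5 c t g).Adj a b := by
  obtain ⟨hne, h | h⟩ := (fromRel_adj _ a b).1 hab
  · exact M5_adj_of_satRel hg ha hb hne h
  · exact (M5_adj_of_satRel hg hb ha hne.symm h).symm

end SatGraph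

theorem m5_isInducedMatching {n m : ℕ} (c : Fin m → Finset (Fin n × Bool))
    (t : Fin n → Bool)
    (g : Fin m → Fin n × Bool) (hg : ∀ j, g j ∈ c j ∧ t (g j).1 = (g j).2) :
    IsInducedMatching (satGraph c) (M5 c t g) ∧ (M5 c t g).edgeSet.ncard = n + m := by
  have hf := satGraph_adj_m5Pair (t := t) fun j => (hg j).1
  have hinj : EndpointsInjective (m5Pair t g) := endpointsInjective_m5Pair
  refine ⟨isInducedMatching_of_isMatching ?_ fun a ha b hb => M5_adj_of_adj hg ha hb, ?_⟩
  · rw [M5_eq_pairsSubgraph_range]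
    exact isMatching_pairsSubgraph_range hf hinj
  · rw [M5_eq_pairsSubgraph_range, ncard_edgeSet_pairsSubgraph_range hf hinj]
    simp
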